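/- arXiv:math/0403490 — 2 statements merged into one kernel-verified Lean document; each statement's English description precedes it below -/
import Mathlib

section
/- Let a < b be real numbers, m a positive integer, J an m×m complex matrix, and H : [a,b] → (m×m complex matrices) continuous. Fix x ∈ [a,b]. Suppose for each y > 0 the function W(·, iy) : [a,b] → (m×m complex matrices) is continuous, satisfies W(ξ, iy) = I + iJ ∫ₐ^ξ H(t)/(iy − t) · W(t, iy) dt for all ξ ∈ [a,x], and suppose there is a constant C with ‖W(ξ, iy)‖ ≤ C for all ξ ∈ [a,x] and all y ≥ 1. Then (iy)·(W(x, iy) − I) converges, as y → ∞, to iJ ∫ₐˣ H(t) dt; i.e. the first coefficient M₁(x) in the expansion W(x,z) = I + M₁(x)/z + M₂(x)/z² + … at z = ∞ equals iJ∫ₐˣ H(t)dt = iJ·B(x). -/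
open Matrix MeasureTheory

attribute [local instance] Matrix.normedAddCommGroup Matrix.normedSpace

lemma aux_norm_mul_le {m : ℕ} (A B : Matrix (Fin m) (Fin m) ℂ) : ‖A * B‖ ≤ m * ‖A‖ * ‖B‖ := by
  rw [Matrix.norm_le_iff (by positivity)]
  intro i j
  calc ‖(A * B) i j‖ = ‖∑ k, A i k * B k j‖ := by rw [Matrix.mul_apply]
    _ ≤ ∑ k, ‖A i k * B k j‖ := norm_sum_le _ _
    _ ≤ ∑ _k : Fin m, ‖A‖ * ‖B‖ := by
        refine Finset.sum_le_sum fun k _ => ?_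
        rw [norm_mul]
        exact mul_le_mul (Matrix.norm_entry_le_entrywise_sup_norm A)
          (Matrix.norm_entry_le_entrywise_sup_norm B) (norm_nonneg _) (norm_nonneg _)
    _ = m * ‖A‖ * ‖B‖ := by simp [mul_assoc]


/-- Suppose for each `y > 0` the function `W(·, iy)` is continuous
on `[a,b]` and satisfies `W(ξ, iy) = I + iJ∫ₐ^ξ H(t)/(iy−t)·W(t, iy)dt` for
`ξ ∈ [a,x]`, and `‖W(ξ, iy)‖ ≤ C` for `ξ ∈ [a,x]`, `y ≥ 1`. Then
`iy·(W(x, iy) − I) → iJ∫ₐˣ H(t)dt` as `y → ∞`; i.e. the first coefficient of the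
expansion at `z = ∞` is `M₁(x) = iJ·B(x)` with `B(x) = ∫ₐˣ H(t)dt`. -/
theorem stmt_4 {m : ℕ} (hm : 0 < m) {a b : ℝ} (hab : a < b)
    (J : Matrix (Fin m) (Fin m) ℂ)
    (H : ℝ → Matrix (Fin m) (Fin m) ℂ) (hH : ContinuousOn H (Set.Icc a b))
    (x : ℝ) (hx : x ∈ Set.Icc a b)
    (W : ℝ → ℂ → Matrix (Fin m) (Fin m) ℂ)
    (hWcont : ∀ y : ℝ, 0 < y →
      ContinuousOn (fun ξ => W ξ (Complex.I * y)) (Set.Icc a b))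
    (hWeq : ∀ y : ℝ, 0 < y → ∀ ξ ∈ Set.Icc a x,
      W ξ (Complex.I * y) = 1 + Complex.I •
        (J * ∫ t in a..ξ, (Complex.I * y - (t : ℂ))⁻¹ • (H t * W t (Complex.I * y))))
    (C : ℝ) (hC : ∀ ξ ∈ Set.Icc a x, ∀ y : ℝ, 1 ≤ y → ‖W ξ (Complex.I * y)‖ ≤ C) :
    Filter.Tendsto
      (fun y : ℝ => (Complex.I * y) • (W x (Complex.I * y) - 1))
      Filter.atTop
      (nhds (Complex.I • (J * ∫ t in a..x, H t))) := by
  have hax : a ≤ x := hx.1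
  have hxa : (0:ℝ) ≤ x - a := sub_nonneg.2 hax
  have hIccsub : Set.Icc a x ⊆ Set.Icc a b := Set.Icc_subset_Icc le_rfl hx.2
  obtain ⟨M0, hM0⟩ := (isCompact_Icc).exists_bound_of_continuousOn hH
  set M : ℝ := max M0 0 with hMdef
  have hM : ∀ t ∈ Set.Icc a x, ‖H t‖ ≤ M := fun t ht =>
    le_trans (hM0 t (hIccsub ht)) (le_max_left _ _)
  have hMnn : 0 ≤ M := le_max_right _ _
  set C0 : ℝ := max C 0 with hC0def
  have hC0 : ∀ ξ ∈ Set.Icc a x, ∀ y : ℝ, 1 ≤ y → ‖W ξ (Complex.I * y)‖ ≤ C0 :=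
    fun ξ hξ y hy => le_trans (hC ξ hξ y hy) (le_max_left _ _)
  have hC0nn : 0 ≤ C0 := le_max_right _ _
  set T : ℝ := max |a| |x| with hTdef
  have hTnn : 0 ≤ T := le_trans (abs_nonneg a) (le_max_left _ _)
  set K₁ : ℝ := m * ‖J‖ * (m * M * C0 * (x - a)) with hK₁def
  have hK₁nn : 0 ≤ K₁ :=
    mul_nonneg (by positivity) (mul_nonneg (by positivity) hxa)
  set K₂ : ℝ := m * M * K₁ + T * M with hK₂def
  have hK₂nn : 0 ≤ K₂ := by positivity
  set K : ℝ := m * ‖J‖ * (K₂ * (x - a)) with hKdef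
  rw [← tendsto_sub_nhds_zero_iff]
  refine squeeze_zero_norm' (a := fun y : ℝ => K / y) ?_ ?_
  · filter_upwards [Filter.eventually_ge_atTop 1] with y hy1
    have hy0 : (0:ℝ) < y := lt_of_lt_of_le one_pos hy1
    set z : ℂ := Complex.I * y with hzdef
    have hz : ∀ t : ℝ, z - t ≠ 0 := by
      intro t h
      have := congrArg Complex.im h
      simp [hzdef] at this
      linarith
    have hzinv : ∀ t : ℝ, ‖((z - t):ℂ)⁻¹‖ ≤ 1 / y := by
      intro t
      rw [norm_inv, one_div]
      apply inv_anti₀ hy0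
      calc y = |(z - t).im| := by simp [hzdef, abs_of_pos hy0]
        _ ≤ ‖z - t‖ := Complex.abs_im_le_norm _
    set F : ℝ → Matrix (Fin m) (Fin m) ℂ := fun t => (z - t)⁻¹ • (H t * W t z) with hFdef
    -- continuity and integrability
    have hcontHW : ContinuousOn (fun t => H t * W t z) (Set.Icc a x) :=
      (hH.mono hIccsub).mul ((hWcont y hy0).mono hIccsub)
    have hcontinv : ContinuousOn (fun t : ℝ => ((z - t)⁻¹ : ℂ)) (Set.Icc a x) :=
      ((continuous_const.sub Complex.continuous_ofReal).continuousOn).inv₀ fun t _ => hz t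
    have hFcont : ContinuousOn F (Set.Icc a x) := hcontinv.smul hcontHW
    have hFintx : @IntervalIntegrable _ _ NormedAddCommGroup.toENormedAddCommMonoid.toENormedAddMonoid F volume a x := by
      apply ContinuousOn.intervalIntegrable
      rwa [Set.uIcc_of_le hax]
    have hHint : @IntervalIntegrable _ _ NormedAddCommGroup.toENormedAddCommMonoid.toENormedAddMonoid H volume a x := by
      apply ContinuousOn.intervalIntegrable
      rw [Set.uIcc_of_le hax]
      exact hH.mono hIccsub
    -- bound on F
    have hFb : ∀ t ∈ Set.Icc a x, ‖F t‖ ≤ m * M * C0 * (1 / y) := by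
      intro t ht
      rw [hFdef]
      calc ‖(z - t)⁻¹ • (H t * W t z)‖ = ‖((z - t):ℂ)⁻¹‖ * ‖H t * W t z‖ := norm_smul _ _
        _ ≤ (1 / y) * (m * ‖H t‖ * ‖W t z‖) :=
            mul_le_mul (hzinv t) (aux_norm_mul_le _ _) (norm_nonneg _) (by positivity)
        _ ≤ (1 / y) * (m * M * C0) := by
            gcongr
            · exact hM t ht
            · exact hC0 t ht y hy1
        _ = m * M * C0 * (1 / y) := by ring
    -- bound on W - 1
    have hWsub : ∀ t ∈ Set.Icc a x, ‖W t z - 1‖ ≤ K₁ / y := by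
      intro t ht
      have heq : W t z - 1 = Complex.I • (J * ∫ s in a..t, F s) := by
        rw [hWeq y hy0 t ht]; rw [add_sub_cancel_left]
      have hint : ‖∫ s in a..t, F s‖ ≤ m * M * C0 * (1 / y) * |t - a| := by
        apply intervalIntegral.norm_integral_le_of_norm_le_const
        intro s hs
        rw [Set.uIoc_of_le ht.1] at hs
        exact hFb s ⟨le_of_lt hs.1, le_trans hs.2 ht.2⟩
      rw [heq, norm_smul, Complex.norm_I, one_mul]
      calc ‖J * ∫ s in a..t, F s‖ ≤ m * ‖J‖ * ‖∫ s in a..t, F s‖ := aux_norm_mul_le _ _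
        _ ≤ m * ‖J‖ * (m * M * C0 * (1 / y) * |t - a|) := by gcongr
        _ ≤ m * ‖J‖ * (m * M * C0 * (1 / y) * (x - a)) := by
            gcongr
            rw [abs_of_nonneg (sub_nonneg.2 ht.1)]
            linarith [ht.2]
        _ = K₁ / y := by rw [hK₁def]; field_simp; try ring
    -- pointwise bound on integrand
    have hpt : ∀ t ∈ Set.Icc a x, ‖z • F t - H t‖ ≤ K₂ / y := by
      intro t ht
      set c : ℂ := z * (z - t)⁻¹ with hcdef
      have hzF : z • F t = c • (H t * W t z) := by simp only [hFdef, smul_smul, hcdef]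
      have hznorm : ‖z‖ = y := by
        rw [hzdef, norm_mul, Complex.norm_I, one_mul, Complex.norm_real,
          Real.norm_eq_abs, abs_of_pos hy0]
      have hcle : ‖c‖ ≤ 1 := by
        rw [hcdef, norm_mul, hznorm]
        calc y * ‖((z - t):ℂ)⁻¹‖ ≤ y * (1 / y) := by gcongr; exact hzinv t
          _ = 1 := by field_simp
      have hc1 : c - 1 = (t:ℂ) * (z - t)⁻¹ := by
        rw [hcdef]; field_simp [hz t]; try ring
      have hc1le : ‖c - 1‖ ≤ T * (1 / y) := by
        rw [hc1, norm_mul]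
        have : ‖(t:ℂ)‖ ≤ T := by
          rw [Complex.norm_real, Real.norm_eq_abs]
          exact abs_le_max_abs_abs ht.1 ht.2
        exact mul_le_mul this (hzinv t) (norm_nonneg _) hTnn
      have hsplit : z • F t - H t = c • (H t * (W t z - 1)) + (c - 1) • H t := by
        rw [hzF, mul_sub, mul_one, smul_sub, sub_smul, one_smul]
        abel
      rw [hsplit]
      calc ‖c • (H t * (W t z - 1)) + (c - 1) • H t‖
          ≤ ‖c • (H t * (W t z - 1))‖ + ‖(c - 1) • H t‖ := norm_add_le _ _
        _ = ‖c‖ * ‖H t * (W t z - 1)‖ + ‖c - 1‖ * ‖H t‖ := by rw [norm_smul, norm_smul]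
        _ ≤ 1 * (m * M * (K₁ / y)) + (T * (1 / y)) * M := by
            apply add_le_add
            · apply mul_le_mul hcle _ (norm_nonneg _) zero_le_one
              calc ‖H t * (W t z - 1)‖ ≤ m * ‖H t‖ * ‖W t z - 1‖ := aux_norm_mul_le _ _
                _ ≤ m * M * (K₁ / y) := by
                    apply mul_le_mul _ (hWsub t ht) (norm_nonneg _) (by positivity)
                    gcongr
                    exact hM t ht
            · exact mul_le_mul hc1le (hM t ht) (norm_nonneg _) (by positivity)
        _ = K₂ / y := by rw [hK₂def]; field_simp; try ring
    -- main computation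
    have hWx := hWeq y hy0 x ⟨hax, le_rfl⟩
    have e1 : z • (W x z - 1) - Complex.I • (J * ∫ t in a..x, H t)
        = Complex.I • (J * ((∫ t in a..x, z • F t) - ∫ t in a..x, H t)) := by
      rw [hWx, add_sub_cancel_left, smul_comm z Complex.I, ← Matrix.mul_smul,
        ← intervalIntegral.integral_smul, ← smul_sub, ← mul_sub]
    have e2 : (∫ t in a..x, z • F t) - ∫ t in a..x, H t
        = ∫ t in a..x, (z • F t - H t) :=
      (intervalIntegral.integral_sub (hFintx.smul z) hHint).symm
    have hDb : ‖∫ t in a..x, (z • F t - H t)‖ ≤ K₂ / y * (x - a) := by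
      have := intervalIntegral.norm_integral_le_of_norm_le_const
        (C := K₂ / y) (f := fun t => z • F t - H t) (a := a) (b := x) ?_
      · rwa [abs_of_nonneg hxa] at this
      · intro s hs
        rw [Set.uIoc_of_le hax] at hs
        exact hpt s ⟨le_of_lt hs.1, hs.2⟩
    calc ‖z • (W x z - 1) - Complex.I • (J * ∫ t in a..x, H t)‖
        = ‖J * ∫ t in a..x, (z • F t - H t)‖ := by
          rw [e1, e2, norm_smul, Complex.norm_I, one_mul]
      _ ≤ m * ‖J‖ * ‖∫ t in a..x, (z • F t - H t)‖ := aux_norm_mul_le _ _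
      _ ≤ m * ‖J‖ * (K₂ / y * (x - a)) := by gcongr
      _ = K / y := by rw [hKdef]; field_simp; try ring
  · exact Filter.Tendsto.div_atTop tendsto_const_nhds Filter.tendsto_id
end

section
/- Let ψ be a complex number, j = diag(−1, 1), R = (1/2)·[[2 − |ψ|², −(ψ̄)²],[ψ², 2 + |ψ|²]], and let F₁ = [ψ, ψ̄] be the 1×2 row matrix. Then R − R⁻¹ = j·F₁*·F₁, where R⁻¹ = 2I − R. -/
/-!
Write `M = j F₁ᴴ F₁`. Since `F₁ j F₁ᴴ = -|ψ|² + |ψ̄|² = 0`, the matrix `M` squares to zero, and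
`R = 1 + M / 2`. Hence `R⁻¹ = 1 - M / 2 = 2 - R`, and `R - R⁻¹ = M`.
-/

open Matrix Complex

namespace Matrix

variable {m n α : Type*} [Fintype m] [Fintype n] [CommRing α]

theorem mul_self_eq_zero_of_mul_mul_eq_zero {A : Matrix m n α} {B : Matrix n m α} {j : Matrix n n α}
    (h : A * j * B = 0) : j * (B * A) * (j * (B * A)) = 0 := by
  calc j * (B * A) * (j * (B * A)) = j * B * (A * j * B) * A := by simp only [Matrix.mul_assoc]
    _ = 0 := by rw [h, Matrix.mul_zero, Matrix.zero_mul]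

variable [DecidableEq n]

theorem inv_one_add_of_mul_self_eq_zero {N : Matrix n n α} (hN : N * N = 0) :
    (1 + N)⁻¹ = 1 - N :=
  inv_eq_right_inv (by simp [Matrix.add_mul, Matrix.mul_sub, hN])

end Matrix

/-- For `ψ ∈ ℂ`, `j = diag(−1,1)`,
`R = (1/2)·[[2 − |ψ|², −ψ̄²],[ψ², 2 + |ψ|²]]` and `F₁ = [ψ, ψ̄]`, one has
`R − R⁻¹ = j·F₁ᴴ·F₁`, where `R⁻¹ = 2I − R`. -/
theorem stmt_16 (ψ : ℂ)
    (j R : Matrix (Fin 2) (Fin 2) ℂ)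
    (hj : j = Matrix.of ![![(-1 : ℂ), 0], ![0, 1]])
    (hR : R = (1/2 : ℂ) • Matrix.of
      ![![2 - ψ * (starRingEnd ℂ) ψ, -((starRingEnd ℂ) ψ)^2],
        ![ψ^2, 2 + ψ * (starRingEnd ℂ) ψ]])
    (F₁ : Matrix (Fin 1) (Fin 2) ℂ)
    (hF₁ : F₁ = Matrix.of ![![ψ, (starRingEnd ℂ) ψ]]) :
    R - R⁻¹ = j * (F₁ᴴ * F₁) ∧
      R⁻¹ = (2 : ℂ) • (1 : Matrix (Fin 2) (Fin 2) ℂ) - R := by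
  have h_null : F₁ * j * F₁ᴴ = 0 := by
    subst hj hF₁
    ext i k
    fin_cases i; fin_cases k
    simp [Matrix.mul_apply, Fin.sum_univ_succ, conjTranspose_apply]
    ring
  have h_jF : j * (F₁ᴴ * F₁) =
      !![-(ψ * starRingEnd ℂ ψ), -(starRingEnd ℂ ψ) ^ 2; ψ ^ 2, ψ * starRingEnd ℂ ψ] := by
    subst hj hF₁
    ext i k
    fin_cases i <;> fin_cases k <;> simp [Matrix.mul_apply, Fin.sum_univ_succ] <;> ring
  have h_R : R = 1 + (1/2 : ℂ) • (j * (F₁ᴴ * F₁)) := by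
    rw [h_jF, hR]
    ext i k
    fin_cases i <;> fin_cases k <;> simp <;> ring
  have h_sq : (1/2 : ℂ) • (j * (F₁ᴴ * F₁)) * ((1/2 : ℂ) • (j * (F₁ᴴ * F₁))) = 0 := by
    rw [Matrix.smul_mul, Matrix.mul_smul, mul_self_eq_zero_of_mul_mul_eq_zero h_null, smul_zero, smul_zero]
  have h_inv : R⁻¹ = 1 - (1/2 : ℂ) • (j * (F₁ᴴ * F₁)) := by
    rw [h_R, inv_one_add_of_mul_self_eq_zero h_sq]
  refine ⟨?_, ?_⟩ <;> rw [h_inv, h_R] <;> module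
end
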